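/- arXiv:1401.6997 — 3 statements merged into one kernel-verified Lean document; each statement's English description precedes it below -/
import Mathlib

section
/- Let d ≥ 2 be even, q an odd prime power, and j ∈ F_q^*. The homogeneous variety H_j = {(x_1, ..., x_{d+1}) ∈ F_q^{d+1} : x_1² + ... + x_d² = j x_{d+1}²} has exactly q^d elements. -/
open Finset

section Aux

variable {F : Type} [Field F] [Fintype F] [DecidableEq F]

/-- number of solutions of `∑ x i ^ 2 = c` in `F^m`, as an integer. -/
private def Nsol (F : Type) [Field F] [Fintype F] [DecidableEq F] (m : ℕ) (c : F) : ℤ :=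
  ((univ.filter (fun x : Fin m → F => ∑ i, x i ^ 2 = c)).card : ℤ)

/-- the weight function `D`. -/
private def Dw (F : Type) [Field F] [Fintype F] [DecidableEq F] (c : F) : ℤ :=
  if c = 0 then (Fintype.card F : ℤ) - 1 else -1

private lemma sum_Dw_zero : ∑ c : F, Dw F c = 0 := by
  have h : ∀ c : F, Dw F c = (if c = 0 then (Fintype.card F : ℤ) else 0) + (-1) := by
    intro c; unfold Dw
    by_cases hc : c = 0
    · simp only [hc, if_pos rfl, if_true]; ring
    · simp [hc]
  rw [Finset.sum_congr rfl fun c _ => h c, Finset.sum_add_distrib,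
    Finset.sum_ite_eq' univ (0 : F) (fun _ => (Fintype.card F : ℤ))]
  simp [Finset.card_univ]

/-- fibering a sum over squares. -/
private lemma sum_sq_fiber (hchar : ringChar F ≠ 2) (g : F → ℤ) :
    ∑ t : F, g (t ^ 2) = ∑ a : F, ((quadraticChar F a : ℤ) + 1) * g a := by
  rw [← Finset.sum_fiberwise univ (fun t : F => t ^ 2) (fun t => g (t ^ 2))]
  refine Finset.sum_congr rfl fun a _ => ?_
  rw [Finset.sum_congr rfl (fun t ht => by
      rw [(Finset.mem_filter.mp ht).2] : ∀ t ∈ univ.filter (fun t : F => t ^ 2 = a),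
        g (t ^ 2) = g a),
    Finset.sum_const, nsmul_eq_mul]
  congr 1
  have h := quadraticChar_card_sqrts hchar a
  rwa [Set.toFinset_setOf] at h

private lemma sum_chi_shift (c : F) :
    ∑ a : F, (quadraticChar F (c - a) : ℤ) = ∑ a : F, (quadraticChar F a : ℤ) :=
  Fintype.sum_equiv (Equiv.subLeft c) _ _ (fun a => rfl)

private lemma sum_Dw_shift (c : F) :
    ∑ a : F, Dw F (c - a) = 0 := by
  exact (Fintype.sum_equiv (Equiv.subLeft c) (fun a => Dw F (c - a))
    (fun a => Dw F a) (fun a => rfl)).trans sum_Dw_zero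

/-- the key Jacobi-sum computation. -/
private lemma keyB (hchar : ringChar F ≠ 2) (c : F) :
    ∑ a : F, (quadraticChar F a : ℤ) * quadraticChar F (c - a)
      = quadraticChar F (-1) * Dw F c := by
  by_cases hc : c = 0
  · subst hc
    unfold Dw
    rw [if_pos rfl]
    have h : ∀ a : F, (quadraticChar F a : ℤ) * quadraticChar F (0 - a)
        = quadraticChar F (-1) * ((1 : ℤ) - if a = 0 then 1 else 0) := by
      intro a
      by_cases ha : a = 0
      · simp [ha]
      · have h0 : (0 : F) - a = -1 * a := by ring
        rw [h0, map_mul]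
        have hsq : (quadraticChar F a : ℤ) ^ 2 = 1 := quadraticChar_sq_one ha
        rw [if_neg ha]
        push_cast
        linear_combination (quadraticChar F (-1) : ℤ) * hsq
    rw [Finset.sum_congr rfl fun a _ => h a, ← Finset.mul_sum, Finset.sum_sub_distrib,
      Finset.sum_ite_eq' univ (0 : F) (fun _ => (1 : ℤ))]
    simp [Finset.card_univ]
  · unfold Dw
    rw [if_neg hc]
    have hJ : jacobiSum (quadraticChar F) (quadraticChar F) = -quadraticChar F (-1) := by
      have h1 : jacobiSum (quadraticChar F) (quadraticChar F)
          = jacobiSum (quadraticChar F) (quadraticChar F)⁻¹ := by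
        rw [(quadraticChar_isQuadratic F).inv]
      rw [h1]
      exact jacobiSum_nontrivial_inv (quadraticChar_ne_one hchar)
    have hre : ∑ a : F, (quadraticChar F a : ℤ) * quadraticChar F (c - a)
        = ∑ b : F, (quadraticChar F (c * b) : ℤ) * quadraticChar F (c - c * b) :=
      (Fintype.sum_equiv (Equiv.mulLeft₀ c hc)
        (fun b => (quadraticChar F (c * b) : ℤ) * quadraticChar F (c - c * b))
        (fun a => (quadraticChar F a : ℤ) * quadraticChar F (c - a))
        (fun b => rfl)).symm
    rw [hre]
    have hterm : ∀ b : F, (quadraticChar F (c * b) : ℤ) * quadraticChar F (c - c * b)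
        = (quadraticChar F b : ℤ) * quadraticChar F (1 - b) := by
      intro b
      have h1 : c - c * b = c * (1 - b) := by ring
      rw [h1, map_mul, map_mul]
      have hsq : (quadraticChar F c : ℤ) ^ 2 = 1 := quadraticChar_sq_one hc
      push_cast
      linear_combination ((quadraticChar F b : ℤ) * quadraticChar F (1 - b)) * hsq
    rw [Finset.sum_congr rfl fun b _ => hterm b]
    have hjs : ∑ b : F, (quadraticChar F b : ℤ) * quadraticChar F (1 - b)
        = jacobiSum (quadraticChar F) (quadraticChar F) := rfl
    rw [hjs, hJ]
    ring

/-- `∑_b χ(b) D(u - b) = q χ(u)`. -/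
private lemma keyC (hchar : ringChar F ≠ 2) (u : F) :
    ∑ b : F, (quadraticChar F b : ℤ) * Dw F (u - b)
      = (Fintype.card F : ℤ) * quadraticChar F u := by
  have h : ∀ b : F, (quadraticChar F b : ℤ) * Dw F (u - b)
      = (if b = u then (quadraticChar F u : ℤ) * (Fintype.card F : ℤ) else 0)
        + (quadraticChar F b : ℤ) * (-1) := by
    intro b
    unfold Dw
    by_cases hb : b = u
    · subst hb; rw [if_pos (sub_self b), if_pos rfl]; ring
    · rw [if_neg (sub_ne_zero.mpr fun h => hb h.symm), if_neg hb]; ring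
  rw [Finset.sum_congr rfl fun b _ => h b, Finset.sum_add_distrib,
    Finset.sum_ite_eq' univ u (fun _ => (quadraticChar F u : ℤ) * (Fintype.card F : ℤ))]
  have hz : ∑ b : F, (quadraticChar F b : ℤ) * (-1)
      = -(∑ b : F, (quadraticChar F b : ℤ)) := by simp
  have hs : ∑ b : F, quadraticChar F b = 0 := quadraticChar_sum_zero hchar
  rw [hz, hs, neg_zero, add_zero, if_pos (Finset.mem_univ u)]
  ring

private lemma sum_Dw_sq (hchar : ringChar F ≠ 2) (u : F) :
    ∑ t : F, Dw F (u - t ^ 2) = (Fintype.card F : ℤ) * quadraticChar F u := by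
  rw [sum_sq_fiber hchar (fun a => Dw F (u - a))]
  have h : ∀ a : F, ((quadraticChar F a : ℤ) + 1) * Dw F (u - a)
      = (quadraticChar F a : ℤ) * Dw F (u - a) + Dw F (u - a) := fun a => by ring
  rw [Finset.sum_congr rfl fun a _ => h a, Finset.sum_add_distrib, keyC hchar u,
    sum_Dw_shift u, add_zero]

private lemma sum_chi_sq (hchar : ringChar F ≠ 2) (u : F) :
    ∑ t : F, (quadraticChar F (u - t ^ 2) : ℤ) = quadraticChar F (-1) * Dw F u := by
  rw [sum_sq_fiber hchar (fun a => (quadraticChar F (u - a) : ℤ))]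
  have h : ∀ a : F, ((quadraticChar F a : ℤ) + 1) * quadraticChar F (u - a)
      = (quadraticChar F a : ℤ) * quadraticChar F (u - a)
        + (quadraticChar F (u - a) : ℤ) := fun a => by ring
  rw [Finset.sum_congr rfl fun a _ => h a, Finset.sum_add_distrib, keyB hchar u,
    sum_chi_shift u, quadraticChar_sum_zero hchar, add_zero]

private lemma Nsol_succ (m : ℕ) (c : F) :
    Nsol F (m + 1) c = ∑ t : F, Nsol F m (c - t ^ 2) := by
  unfold Nsol
  rw [← Nat.cast_sum]
  congr 1
  rw [Finset.card_filter]
  rw [← Equiv.sum_comp (Fin.consEquiv (fun _ : Fin (m + 1) => F))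
    (fun x : Fin (m + 1) → F => if ∑ i, x i ^ 2 = c then 1 else 0)]
  rw [Fintype.sum_prod_type]
  refine Finset.sum_congr rfl fun t _ => ?_
  rw [Finset.card_filter]
  refine Finset.sum_congr rfl fun y _ => ?_
  have h1 : ∑ i, (Fin.consEquiv (fun _ : Fin (m + 1) => F) (t, y)) i ^ 2
      = t ^ 2 + ∑ i, y i ^ 2 := by
    simp [Fin.consEquiv, Fin.sum_univ_succ]
  rw [h1]
  exact if_congr eq_sub_iff_add_eq'.symm rfl rfl

private lemma Nsol_one (hchar : ringChar F ≠ 2) (c : F) :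
    Nsol F 1 c = (quadraticChar F c : ℤ) + 1 := by
  unfold Nsol
  have h : (univ.filter (fun x : Fin 1 → F => ∑ i, x i ^ 2 = c)).card
      = (univ.filter (fun t : F => t ^ 2 = c)).card := by
    rw [Finset.card_filter, Finset.card_filter]
    rw [← Equiv.sum_comp (Equiv.funUnique (Fin 1) F).symm
      (fun x : Fin 1 → F => if ∑ i, x i ^ 2 = c then 1 else 0)]
    refine Finset.sum_congr rfl fun t _ => ?_
    exact if_congr (by simp [Equiv.funUnique]) rfl rfl
  rw [h]
  have h2 := quadraticChar_card_sqrts hchar c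
  rwa [Set.toFinset_setOf] at h2

/-- main point-count formula for an even number of variables. -/
private lemma Nsol_even (hchar : ringChar F ≠ 2) (k : ℕ) (c : F) :
    Nsol F (2 * k + 2) c = (Fintype.card F : ℤ) ^ (2 * k + 1)
      + (quadraticChar F (-1) : ℤ) ^ (k + 1) * Dw F c * (Fintype.card F : ℤ) ^ k := by
  induction k generalizing c with
  | zero =>
    rw [show 2 * 0 + 2 = 1 + 1 from rfl, Nsol_succ]
    rw [Finset.sum_congr rfl fun t _ => Nsol_one hchar (c - t ^ 2)]
    rw [Finset.sum_add_distrib, sum_chi_sq hchar c, Finset.sum_const, Finset.card_univ,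
      nsmul_eq_mul, mul_one]
    ring
  | succ k ih =>
    have hstep : Nsol F (2 * (k + 1) + 2) c = ∑ s : F, ∑ t : F,
        Nsol F (2 * k + 2) ((c - s ^ 2) - t ^ 2) := by
      rw [show 2 * (k + 1) + 2 = (2 * k + 2 + 1) + 1 from by ring, Nsol_succ]
      exact Finset.sum_congr rfl fun s _ => Nsol_succ (2 * k + 2) (c - s ^ 2)
    rw [hstep]
    have hinner : ∀ s : F, ∑ t : F, Nsol F (2 * k + 2) ((c - s ^ 2) - t ^ 2)
        = (Fintype.card F : ℤ) ^ (2 * k + 2)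
          + (quadraticChar F (-1) : ℤ) ^ (k + 1) * (Fintype.card F : ℤ) ^ (k + 1)
            * quadraticChar F (c - s ^ 2) := by
      intro s
      rw [Finset.sum_congr rfl fun t _ => ih ((c - s ^ 2) - t ^ 2),
        Finset.sum_add_distrib, Finset.sum_const, Finset.card_univ, nsmul_eq_mul]
      have h2 : ∑ t : F, (quadraticChar F (-1) : ℤ) ^ (k + 1) * Dw F ((c - s ^ 2) - t ^ 2)
            * (Fintype.card F : ℤ) ^ k
          = (quadraticChar F (-1) : ℤ) ^ (k + 1) * (Fintype.card F : ℤ) ^ k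
            * ∑ t : F, Dw F ((c - s ^ 2) - t ^ 2) := by
        rw [Finset.mul_sum]
        exact Finset.sum_congr rfl fun t _ => by ring
      rw [h2, sum_Dw_sq hchar]
      ring
    rw [Finset.sum_congr rfl fun s _ => hinner s, Finset.sum_add_distrib, Finset.sum_const,
      Finset.card_univ, nsmul_eq_mul, ← Finset.mul_sum, sum_chi_sq hchar c]
    have hsq : (quadraticChar F (-1) : ℤ) ^ 2 = 1 :=
      quadraticChar_sq_one (neg_ne_zero.mpr one_ne_zero)
    have : (quadraticChar F (-1) : ℤ) ^ (k + 1) * (quadraticChar F (-1) : ℤ)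
        = (quadraticChar F (-1) : ℤ) ^ (k + 1 + 1) := by ring
    rw [show 2 * (k + 1) + 1 = (2 * k + 2) + 1 from by ring]
    ring

end Aux

theorem card_homogeneous_variety_H
    (F : Type) [Field F] [Fintype F] [DecidableEq F]
    (hchar : ringChar F ≠ 2)
    (d : ℕ) (hd2 : 2 ≤ d) (hdeven : Even d) (j : F) (hj : j ≠ 0) :
    (univ.filter (fun x : (Fin d → F) × F =>
        ∑ i, (x.1 i) ^ 2 = j * x.2 ^ 2)).card = Fintype.card F ^ d := by
  obtain ⟨m, hm⟩ := hdeven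
  obtain ⟨k, hk⟩ : ∃ k, d = 2 * k + 2 := ⟨m - 1, by omega⟩
  have key : (univ.filter (fun x : (Fin d → F) × F =>
        ∑ i, (x.1 i) ^ 2 = j * x.2 ^ 2)).card
      = ∑ t : F, (univ.filter (fun y : Fin d → F => ∑ i, y i ^ 2 = j * t ^ 2)).card := by
    rw [Finset.card_filter, Fintype.sum_prod_type_right]
    exact Finset.sum_congr rfl fun t _ => (Finset.card_filter _ _).symm
  have keyZ : ((univ.filter (fun x : (Fin d → F) × F =>
        ∑ i, (x.1 i) ^ 2 = j * x.2 ^ 2)).card : ℤ)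
      = ∑ t : F, Nsol F d (j * t ^ 2) := by
    rw [key]; push_cast [Nsol]; rfl
  have hDjt : ∀ t : F, Dw F (j * t ^ 2)
      = (if t = 0 then (Fintype.card F : ℤ) else 0) + (-1) := by
    intro t
    unfold Dw
    by_cases ht : t = 0
    · subst ht
      rw [if_pos (show j * (0 : F) ^ 2 = 0 by ring), if_pos rfl]
      ring
    · rw [if_neg (by simp [hj, pow_eq_zero_iff, ht]), if_neg ht]
      ring
  have hDsum : ∑ t : F, Dw F (j * t ^ 2) = 0 := by
    rw [Finset.sum_congr rfl fun t _ => hDjt t, Finset.sum_add_distrib,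
      Finset.sum_ite_eq' univ (0 : F) (fun _ => (Fintype.card F : ℤ))]
    simp [Finset.card_univ]
  have main : ((univ.filter (fun x : (Fin d → F) × F =>
        ∑ i, (x.1 i) ^ 2 = j * x.2 ^ 2)).card : ℤ) = (Fintype.card F : ℤ) ^ d := by
    rw [keyZ, hk]
    rw [Finset.sum_congr rfl fun t _ => Nsol_even hchar k (j * t ^ 2),
      Finset.sum_add_distrib, Finset.sum_const, Finset.card_univ, nsmul_eq_mul]
    have h2 : ∑ t : F, (quadraticChar F (-1) : ℤ) ^ (k + 1) * Dw F (j * t ^ 2)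
          * (Fintype.card F : ℤ) ^ k
        = (quadraticChar F (-1) : ℤ) ^ (k + 1) * (Fintype.card F : ℤ) ^ k
          * ∑ t : F, Dw F (j * t ^ 2) := by
      rw [Finset.mul_sum]
      exact Finset.sum_congr rfl fun t _ => by ring
    rw [h2, hDsum]
    ring
  exact_mod_cast main
end

section
/- Let d ≥ 2 be even, q an odd prime power, and χ a nontrivial additive character of F_q. Let C = {x ∈ F_q^{d+1} : x_1² + ... + x_{d-1}² = x_d x_{d+1}} and define the inverse Fourier transform of its normalized surface measure by (dσ_c)^∨(m) = |C|^{-1} Σ_{x ∈ C} χ(m·x). Then for every m ∈ F_q^{d+1} with m ≠ 0, |(dσ_c)^∨(m)| ≤ q^{-d/2}. -/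
/-!
Write `x = (y, a, b)`, `Q x = ∑ yᵢ² - a b` and let `η` be the quadratic character, `G` its
Gauss sum. Detecting `Q x = 0` by `q⁻¹ ∑ₜ ψ (t Q x)`, the sum over `C` becomes
`q⁻¹ ∑ₜ ∑ₓ ψ (t Q x + m·x)`.
For `t ≠ 0` the inner sum splits into `n = d - 1` completed squares and one hyperbolic sum, and
equals `q (η(t) G)ⁿ ψ(-Q*(m)/t)`. As `n` is odd, `η(t)ⁿ = η(t)`, so the sum over `t ≠ 0` is a
twisted Gauss sum, equal to `0` or `η(-Q*(m)) G`; the term `t = 0` is `q^(d+1)` if `m = 0` and `0`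
otherwise. Taking `m = 0` gives `|C| = q^d`, and for `m ≠ 0` the sum has modulus at most
`|G|^d = q^(d/2)`.
-/

open Finset

lemma AddChar.map_sum_eq_prod {A M ι : Type*} [AddCommMonoid A] [CommMonoid M]
    (ψ : AddChar A M) (s : Finset ι) (f : ι → A) : ψ (∑ i ∈ s, f i) = ∏ i ∈ s, ψ (f i) := by
  induction s using Finset.cons_induction with
  | empty => simp
  | cons a s ha ih => rw [sum_cons, prod_cons, AddChar.map_add_eq_mul, ih]

section CharacterSums

variable {F : Type*} [Field F] [Fintype F] [DecidableEq F] {ψ : AddChar F ℂ}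

lemma sum_addChar_mul (hψ : ψ ≠ 1) (b : F) :
    ∑ x, ψ (b * x) = if b = 0 then (Fintype.card F : ℂ) else 0 := by
  simpa only [mul_comm, Nat.cast_ite, Nat.cast_zero] using
    AddChar.sum_mulShift b (AddChar.IsPrimitive.of_ne_one hψ)

omit [DecidableEq F] in
lemma sum_addChar_pi {ι : Type*} [Fintype ι] [DecidableEq ι] (f : ι → F → F) :
    ∑ y : ι → F, ψ (∑ i, f i (y i)) = ∏ i, ∑ x, ψ (f i x) := by
  simp_rw [AddChar.map_sum_eq_prod]
  exact (Fintype.prod_sum fun i x => ψ (f i x)).symm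

variable (F) in
noncomputable def complexQuadraticChar : MulChar F ℂ :=
  (quadraticChar F).ringHomComp (Int.castRingHom ℂ)

local notation "η" => complexQuadraticChar F

lemma complexQuadraticChar_ne_one (hF : ringChar F ≠ 2) : η ≠ 1 :=
  (MulChar.ringHomComp_ne_one_iff (Int.cast_injective (α := ℂ))).mpr (quadraticChar_ne_one hF)

lemma complexQuadraticChar_isQuadratic : (η).IsQuadratic :=
  (quadraticChar_isQuadratic F).comp _

lemma complexQuadraticChar_apply (a : F) : η a = (quadraticChar F a : ℂ) := rfl

lemma norm_complexQuadraticChar {a : F} (ha : a ≠ 0) : ‖η a‖ = 1 := by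
  rcases quadraticChar_dichotomy ha with h | h <;> simp [complexQuadraticChar_apply, h]

lemma complexQuadraticChar_inv (a : F) : η a⁻¹ = η a := by
  rw [← MulChar.inv_apply', complexQuadraticChar_isQuadratic.inv]

lemma card_sq_eq_complexQuadraticChar_add_one (hF : ringChar F ≠ 2) (u : F) :
    (#{x : F | x ^ 2 = u} : ℂ) = η u + 1 := by
  have h := quadraticChar_card_sqrts hF u
  rw [Set.toFinset_ofPred] at h
  rw [complexQuadraticChar_apply]
  exact_mod_cast h

lemma sum_addChar_mul_sq (hF : ringChar F ≠ 2) (hψ : ψ ≠ 1) {t : F} (ht : t ≠ 0) :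
    ∑ x, ψ (t * x ^ 2) = η t * gaussSum η ψ := by
  have hfib : ∑ x, ψ (t * x ^ 2) = ∑ u, (η u + 1) * ψ (t * u) := by
    rw [← sum_fiberwise univ (· ^ 2)]
    refine sum_congr rfl fun u _ => ?_
    rw [← card_sq_eq_complexQuadraticChar_add_one hF, ← nsmul_eq_mul, ← sum_const]
    exact sum_congr rfl fun x hx => by rw [(mem_filter.mp hx).2]
  have hshift : ∑ u, η u * ψ (t * u) = η t * gaussSum η ψ := by
    have h := gaussSum_mulShift_eq η ψ (Units.mk0 t ht)
    rw [Units.val_mk0, MulChar.inv_apply', complexQuadraticChar_inv] at h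
    rw [← h]
    rfl
  simp only [hfib, add_mul, one_mul, sum_add_distrib, sum_addChar_mul hψ, ht, if_false, add_zero,
    hshift]

lemma sum_addChar_quadratic (hF : ringChar F ≠ 2) (hψ : ψ ≠ 1) {t : F} (ht : t ≠ 0) (c : F) :
    ∑ x, ψ (t * x ^ 2 + c * x) = ψ (-c ^ 2 / (4 * t)) * (η t * gaussSum η ψ) := by
  have h2 : (2 : F) ≠ 0 := Ring.two_ne_zero hF
  have h4 : (4 : F) ≠ 0 := by simpa [← two_add_two_eq_four, ← two_mul] using mul_ne_zero h2 h2
  have hsq : ∀ x, t * (x - c / (2 * t)) ^ 2 + c * (x - c / (2 * t))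
      = -c ^ 2 / (4 * t) + t * x ^ 2 := by
    intro x; field_simp; ring
  rw [← (Equiv.subRight (c / (2 * t))).sum_comp, ← sum_addChar_mul_sq hF hψ ht, mul_sum]
  simp only [Equiv.subRight_apply, hsq, AddChar.map_add_eq_mul]

lemma sum_addChar_hyperbolic (hψ : ψ ≠ 1) {u : F} (hu : u ≠ 0) (α β : F) :
    ∑ a, ∑ b, ψ (u * (a * b) + (α * a + β * b)) = Fintype.card F * ψ (-(α * β) / u) := by
  have hinner : ∀ a, ∑ b, ψ (u * (a * b) + (α * a + β * b))
      = if a = -β / u then Fintype.card F * ψ (-(α * β) / u) else 0 := by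
    intro a
    have hsplit : ∀ b, ψ (u * (a * b) + (α * a + β * b)) = ψ (α * a) * ψ ((u * a + β) * b) := by
      intro b; rw [← AddChar.map_add_eq_mul]; ring_nf
    have hzero : u * a + β = 0 ↔ a = -β / u := by
      rw [eq_div_iff hu]; constructor <;> intro h <;> linear_combination h
    simp_rw [hsplit, ← mul_sum, sum_addChar_mul hψ, hzero]
    split_ifs with h
    · rw [h, mul_comm]; congr 2; field_simp
    · rw [mul_zero]
  simp_rw [hinner, sum_ite_eq', mem_univ, if_true]

lemma sum_complexQuadraticChar_mul_addChar_div (hF : ringChar F ≠ 2) (c : F) :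
    ∑ t, η t * ψ (c / t) = if c = 0 then 0 else η c * gaussSum η ψ := by
  -- the junk value `c / 0 = 0` is harmless: the `t = 0` term carries the factor `η 0 = 0`
  split_ifs with hc
  · simp [hc, MulChar.sum_eq_zero_of_ne_one (complexQuadraticChar_ne_one hF)]
  · have hinv : Function.Involutive (c / · : F → F) := fun t => div_div_cancel₀ hc
    rw [← hinv.bijective.sum_comp, gaussSum, mul_sum]
    refine sum_congr rfl fun t _ => ?_
    rw [div_div_cancel₀ hc, div_eq_mul_inv, map_mul, complexQuadraticChar_inv, mul_assoc]

lemma norm_gaussSum_complexQuadraticChar (hF : ringChar F ≠ 2) (hψ : ψ ≠ 1) :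
    ‖gaussSum η ψ‖ = √(Fintype.card F) := by
  have hsq := congrArg norm (gaussSum_sq (complexQuadraticChar_ne_one hF)
    complexQuadraticChar_isQuadratic (AddChar.IsPrimitive.of_ne_one hψ))
  rw [norm_pow, norm_mul, norm_complexQuadraticChar (neg_ne_zero.mpr one_ne_zero), one_mul,
    Complex.norm_natCast] at hsq
  rw [← hsq, Real.sqrt_sq (norm_nonneg _)]

end CharacterSums

section Cone

variable {F : Type*} [Field F] [Fintype F] [DecidableEq F] {n : ℕ} {ψ : AddChar F ℂ}

local notation "η" => complexQuadraticChar F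
local notation "q" => (Fintype.card F : ℂ)
local notation "G" => gaussSum η ψ

variable (F n) in
def cone : Finset ((Fin n → F) × F × F) := {x | ∑ i, x.1 i ^ 2 = x.2.1 * x.2.2}

def coneForm (x : (Fin n → F) × F × F) : F := ∑ i, x.1 i ^ 2 - x.2.1 * x.2.2

def conePairing (m x : (Fin n → F) × F × F) : F :=
  ∑ i, m.1 i * x.1 i + m.2.1 * x.2.1 + m.2.2 * x.2.2

/-- The dual form `¼ mᵀ A⁻¹ m` of `coneForm x = xᵀ A x`; completing the squares in
`t * coneForm x + conePairing m x` leaves the constant `-coneDualForm m / t`. -/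
def coneDualForm (m : (Fin n → F) × F × F) : F := (∑ i, m.1 i ^ 2) / 4 - m.2.1 * m.2.2

lemma card_mul_sum_cone_eq_sum_coneForm (hψ : ψ ≠ 1) (m : (Fin n → F) × F × F) :
    q * ∑ x ∈ cone F n, ψ (conePairing m x)
      = ∑ t, ∑ x, ψ (t * coneForm x + conePairing m x) := by
  rw [sum_comm]
  simp_rw [mul_comm _ (coneForm _), AddChar.map_add_eq_mul, ← sum_mul, sum_addChar_mul hψ, coneForm,
    sub_eq_zero, ite_mul, zero_mul, ← sum_filter, mul_sum]
  rfl

omit [DecidableEq F] in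
lemma sum_addChar_coneForm_eq_mul (t : F) (m : (Fin n → F) × F × F) :
    ∑ x, ψ (t * coneForm x + conePairing m x)
      = (∑ y : Fin n → F, ψ (∑ i, (t * y i ^ 2 + m.1 i * y i)))
        * ∑ a, ∑ b, ψ (-t * (a * b) + (m.2.1 * a + m.2.2 * b)) := by
  simp_rw [Fintype.sum_prod_type, sum_mul, mul_sum, ← AddChar.map_add_eq_mul]
  refine sum_congr rfl fun y _ => sum_congr rfl fun a _ => sum_congr rfl fun b _ => ?_
  simp only [coneForm, conePairing, sum_add_distrib, ← mul_sum]
  ring_nf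

lemma sum_addChar_conePairing (hψ : ψ ≠ 1) (m : (Fin n → F) × F × F) :
    ∑ x, ψ (conePairing m x) = if m = 0 then q ^ (n + 2) else 0 := by
  split_ifs with hm
  · simp [hm, conePairing, pow_succ, mul_assoc]
  have hfactor : ∑ x, ψ (conePairing m x)
      = (∏ i, ∑ y, ψ (m.1 i * y)) * ((∑ a, ψ (m.2.1 * a)) * ∑ b, ψ (m.2.2 * b)) := by
    rw [← sum_addChar_pi, sum_mul_sum, sum_mul_sum]
    simp_rw [mul_sum, Fintype.sum_prod_type, conePairing, AddChar.map_add_eq_mul, mul_assoc]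
  obtain h | h | h : m.1 ≠ 0 ∨ m.2.1 ≠ 0 ∨ m.2.2 ≠ 0 := by
    contrapose! hm
    exact Prod.ext_iff.mpr ⟨hm.1, Prod.ext_iff.mpr hm.2⟩
  · obtain ⟨i, hi⟩ := Function.ne_iff.mp h
    rw [hfactor, prod_eq_zero (mem_univ i) ((sum_addChar_mul hψ _).trans (if_neg hi)), zero_mul]
  · rw [hfactor, sum_addChar_mul hψ, if_neg h, zero_mul, mul_zero]
  · rw [hfactor, sum_addChar_mul hψ m.2.2, if_neg h, mul_zero, mul_zero]

lemma sum_addChar_coneForm_of_ne_zero (hF : ringChar F ≠ 2) (hψ : ψ ≠ 1) {t : F} (ht : t ≠ 0)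
    (m : (Fin n → F) × F × F) :
    ∑ x, ψ (t * coneForm x + conePairing m x)
      = q * (η t * G) ^ n * ψ (-coneDualForm m / t) := by
  have h2 : (2 : F) ≠ 0 := Ring.two_ne_zero hF
  have h4 : (4 : F) ≠ 0 := by simpa [← two_add_two_eq_four, ← two_mul] using mul_ne_zero h2 h2
  have harg : ∑ i, -m.1 i ^ 2 / (4 * t) + -(m.2.1 * m.2.2) / -t = -coneDualForm m / t := by
    rw [← sum_div, coneDualForm, sum_neg_distrib]
    field_simp
    ring
  rw [sum_addChar_coneForm_eq_mul, sum_addChar_pi (fun i x => t * x ^ 2 + m.1 i * x),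
    sum_addChar_hyperbolic hψ (neg_ne_zero.mpr ht)]
  simp_rw [sum_addChar_quadratic hF hψ ht, prod_mul_distrib, prod_const, card_univ,
    Fintype.card_fin, ← AddChar.map_sum_eq_prod, ← harg, AddChar.map_add_eq_mul]
  ring

lemma card_mul_sum_cone_eq_of_odd (hF : ringChar F ≠ 2) (hψ : ψ ≠ 1) (hn : Odd n)
    (m : (Fin n → F) × F × F) :
    q * ∑ x ∈ cone F n, ψ (conePairing m x)
      = (if m = 0 then q ^ (n + 2) else 0)
        + q * G ^ n
          * (if coneDualForm m = 0 then 0 else η (-coneDualForm m) * G) := by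
  have hodd : ∀ t, η t ^ n = η t := fun t => by
    rw [← MulChar.pow_apply' _ hn.pos.ne', complexQuadraticChar_isQuadratic.pow_odd hn]
  rw [card_mul_sum_cone_eq_sum_coneForm hψ, ← add_sum_erase _ _ (mem_univ 0)]
  congr 1
  · simp only [zero_mul, zero_add, sum_addChar_conePairing hψ]
  · have h := sum_complexQuadraticChar_mul_addChar_div hF (ψ := ψ) (-coneDualForm m)
    simp only [_root_.neg_eq_zero] at h
    rw [← h, mul_sum,
      ← sum_erase univ (a := (0 : F)) (by rw [MulChar.map_zero, zero_mul, mul_zero])]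
    refine sum_congr rfl fun t ht => ?_
    rw [sum_addChar_coneForm_of_ne_zero hF hψ (ne_of_mem_erase ht), mul_pow, hodd]
    ring

lemma card_cone (hF : ringChar F ≠ 2) (hn : Odd n) : (#(cone F n) : ℂ) = q ^ (n + 1) := by
  obtain ⟨ψ, hψ⟩ := AddChar.exists_apply_ne_zero.mpr (one_ne_zero (α := F))
  have h := card_mul_sum_cone_eq_of_odd hF (AddChar.ne_one_iff.mpr ⟨1, hψ⟩) hn 0
  simp only [conePairing, Prod.fst_zero, Pi.zero_apply, zero_mul, sum_const_zero, Prod.snd_zero,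
    add_zero, AddChar.map_zero_eq_one, sum_const, nsmul_eq_mul, mul_one, ↓reduceIte, coneDualForm,
    ne_eq, OfNat.ofNat_ne_zero, not_false_eq_true, zero_pow, zero_div, mul_zero, sub_self] at h
  refine mul_left_cancel₀ (Nat.cast_ne_zero.mpr Fintype.card_ne_zero : q ≠ 0) ?_
  rw [h]
  ring

lemma norm_inv_card_mul_sum_cone_le (hF : ringChar F ≠ 2) (hψ : ψ ≠ 1) (hn : Odd n)
    {m : (Fin n → F) × F × F} (hm : m ≠ 0) :
    ‖(#(cone F n) : ℂ)⁻¹ * ∑ x ∈ cone F n, ψ (conePairing m x)‖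
      ≤ (Fintype.card F : ℝ) ^ (-((n : ℝ) + 1) / 2) := by
  have hq : (0 : ℝ) < Fintype.card F := Nat.cast_pos.mpr Fintype.card_pos
  have hsum : ∑ x ∈ cone F n, ψ (conePairing m x)
      = G ^ n * (if coneDualForm m = 0 then 0 else η (-coneDualForm m) * G) := by
    refine mul_left_cancel₀ (Nat.cast_ne_zero.mpr Fintype.card_ne_zero : q ≠ 0) ?_
    rw [card_mul_sum_cone_eq_of_odd hF hψ hn, if_neg hm, zero_add, mul_assoc]
  have hnorm : ‖∑ x ∈ cone F n, ψ (conePairing m x)‖ ≤ √(Fintype.card F) ^ (n + 1) := by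
    rw [hsum]
    split_ifs with hc
    · simp only [mul_zero, norm_zero]; positivity
    · rw [norm_mul, norm_pow, norm_mul, norm_complexQuadraticChar (neg_ne_zero.mpr hc), one_mul,
        norm_gaussSum_complexQuadraticChar hF hψ, pow_succ]
  have hsqrt : √(Fintype.card F) ^ (n + 1) = (Fintype.card F : ℝ) ^ (((n : ℝ) + 1) / 2) := by
    rw [Real.sqrt_eq_rpow, ← Real.rpow_natCast, ← Real.rpow_mul hq.le]
    push_cast
    ring_nf
  rw [norm_mul, norm_inv, card_cone hF hn, norm_pow, Complex.norm_natCast]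
  calc ((Fintype.card F : ℝ) ^ (n + 1))⁻¹ * ‖∑ x ∈ cone F n, ψ (conePairing m x)‖
      ≤ ((Fintype.card F : ℝ) ^ (n + 1))⁻¹ * √(Fintype.card F) ^ (n + 1) := by gcongr
    _ = (Fintype.card F : ℝ) ^ (-((n : ℝ) + 1) / 2) := by
      rw [hsqrt, ← Real.rpow_natCast, ← Real.rpow_neg hq.le, ← Real.rpow_add hq]
      push_cast
      ring_nf

end Cone

theorem fourier_decay_C
    (F : Type) [Field F] [Fintype F] [DecidableEq F]
    (hchar : ringChar F ≠ 2)
    (d : ℕ) (hd2 : 2 ≤ d) (hdeven : Even d)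
    (χ : AddChar F ℂ) (hχ : χ ≠ 1)
    (m : (Fin (d - 1) → F) × F × F) (hm : m ≠ 0) :
    ‖
      ((((univ.filter (fun x : (Fin (d - 1) → F) × F × F =>
            ∑ i, (x.1 i) ^ 2 = x.2.1 * x.2.2)).card : ℂ))⁻¹ *
        ∑ x ∈ univ.filter (fun x : (Fin (d - 1) → F) × F × F =>
            ∑ i, (x.1 i) ^ 2 = x.2.1 * x.2.2),
          χ (∑ i, m.1 i * x.1 i + m.2.1 * x.2.1 + m.2.2 * x.2.2))‖ ≤
      (Fintype.card F : ℝ) ^ (-(d : ℝ) / 2) := by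
  have hn : Odd (d - 1) := Nat.Even.sub_odd (by omega) hdeven odd_one
  have hd : ((d - 1 : ℕ) : ℝ) + 1 = d := by exact_mod_cast Nat.sub_add_cancel (by omega : 1 ≤ d)
  have h := norm_inv_card_mul_sum_cone_le hchar hχ hn hm
  rw [hd] at h
  exact h
end

section
/- Let q be an odd prime power, d ≥ 2, and let g : F_q^d → ℂ be a d-coordinate lay function, i.e., g(m', m_d) = g(m', s m_d) for all s ∈ F_q^*. Define G_g : F_q^{d+1} → ℂ indirectly by requiring its Fourier transform to satisfy Ĝ_g(x', x_d, s) = ĝ(x', x_d s) for s ≠ 0 and Ĝ_g(x', x_d, 0) = 0. Then G_g is given explicitly by G_g(m, l) = q^{-1} g(m) Σ_{s ∈ F_q^*} χ(l s) for (m, l) ∈ F_q^d × F_q; equivalently G_g(m, l) = g(m)(q−1)/q if l = 0 and G_g(m, l) = −g(m)/q if l ≠ 0. -/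
/-!
Fourier inversion on `F^(d+1)` expresses `G (m, l)` through `Ĝ`. For `s ≠ 0` the scaling
invariance of `g` passes to `ĝ`, so `Ĝ (x', x_d, s) = ĝ (x', x_d)`; the synthesis sum then splits
into a sum over `s ≠ 0` of `χ (l s)` times the Fourier synthesis of `ĝ` on `F^d`, which is
`q^d g (m)` by inversion once more.
-/

open Finset LinearMap
open LinearMap (BilinForm)

variable {F : Type*} [Field F] {χ : AddChar F ℂ}

namespace LinearMap.BilinForm

variable {V₁ V₂ : Type*} [AddCommGroup V₁] [Module F V₁] [AddCommGroup V₂] [Module F V₂]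

def prod (B₁ : BilinForm F V₁) (B₂ : BilinForm F V₂) : BilinForm F (V₁ × V₂) :=
  B₁.compl₁₂ (fst F V₁ V₂) (fst F V₁ V₂) + B₂.compl₁₂ (snd F V₁ V₂) (snd F V₁ V₂)

@[simp]
lemma prod_apply (B₁ : BilinForm F V₁) (B₂ : BilinForm F V₂) (m x : V₁ × V₂) :
    B₁.prod B₂ m x = B₁ m.1 x.1 + B₂ m.2 x.2 :=
  rfl

end LinearMap.BilinForm

lemma LinearMap.SeparatingLeft.prod {V₁ V₂ : Type*} [AddCommGroup V₁] [Module F V₁]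
    [AddCommGroup V₂] [Module F V₂] {B₁ : BilinForm F V₁} {B₂ : BilinForm F V₂}
    (h₁ : B₁.SeparatingLeft) (h₂ : B₂.SeparatingLeft) : (B₁.prod B₂).SeparatingLeft :=
  fun m hm =>
    Prod.ext (h₁ _ fun y => by simpa using hm (y, 0)) (h₂ _ fun y => by simpa using hm (0, y))

lemma LinearMap.separatingLeft_mul : (LinearMap.mul F F).SeparatingLeft := fun a ha => by
  simpa using ha 1

lemma separatingLeft_dotProductBilin {ι : Type*} [Fintype ι] :
    (dotProductBilin F F : BilinForm F (ι → F)).SeparatingLeft :=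
  fun v hv => dotProduct_eq_zero v hv

section Fourier

variable {V : Type*} [AddCommGroup V] [Module F V] [Fintype V]

lemma AddChar.sum_apply_linearMap_eq_zero (hχ : χ ≠ 1) {φ : V →ₗ[F] F} (hφ : φ ≠ 0) :
    ∑ x, χ (φ x) = 0 := by
  obtain ⟨a, ha⟩ := AddChar.ne_one_iff.1 hχ
  obtain ⟨x, rfl⟩ := LinearMap.surjective_of_ne_zero hφ a
  exact AddChar.sum_eq_zero_of_ne_one (ψ := χ.compAddMonoidHom φ.toAddMonoidHom)
    (AddChar.ne_one_iff.2 ⟨x, ha⟩)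

def LinearMap.BilinForm.fourier (B : BilinForm F V) (χ : AddChar F ℂ) (f : V → ℂ) (x : V) :
    ℂ :=
  ∑ m, χ (-B m x) * f m

lemma LinearMap.SeparatingLeft.fourier_inversion {B : BilinForm F V} (hB : B.SeparatingLeft)
    (hχ : χ ≠ 1) (f : V → ℂ) (n : V) :
    ∑ x, χ (B n x) * B.fourier χ f x = Fintype.card V * f n := by
  classical
  have orthogonality : ∀ m,
      ∑ x, χ (B n x) * χ (-B m x) = if m = n then (Fintype.card V : ℂ) else 0 := by
    intro m
    simp_rw [← AddChar.map_add_eq_mul, ← sub_eq_add_neg, ← LinearMap.sub_apply, ← map_sub]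
    split_ifs with h
    · simp [h]
    · refine AddChar.sum_apply_linearMap_eq_zero hχ fun h0 =>
        h (sub_eq_zero.1 (hB _ fun y => ?_)).symm
      rw [h0, LinearMap.zero_apply]
  calc ∑ x, χ (B n x) * B.fourier χ f x
      = ∑ m, (∑ x, χ (B n x) * χ (-B m x)) * f m := by
        simp_rw [BilinForm.fourier, mul_sum, sum_mul, mul_assoc]
        exact sum_comm
    _ = Fintype.card V * f n := by simp [orthogonality]

end Fourier

def IsLay {E : Type*} (g : E × F → ℂ) : Prop :=
  ∀ (m' : E) (md s : F), s ≠ 0 → g (m', md) = g (m', s * md)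

section Lay

variable {E : Type*} [AddCommGroup E] [Module F E] [Fintype E] [Fintype F]

lemma IsLay.fourier_apply_mul_snd {B : BilinForm F E} {g : E × F → ℂ} (hg : IsLay g) {s : F}
    (hs : s ≠ 0) (x : E × F) :
    (B.prod (mul F F)).fourier χ g (x.1, x.2 * s) = (B.prod (mul F F)).fourier χ g x := by
  refine Fintype.sum_equiv ((Equiv.refl E).prodCongr (Equiv.mulRight₀ s hs)) _ _
    fun ⟨m', md⟩ => ?_
  simp only [BilinForm.prod_apply, mul_apply', Equiv.prodCongr_apply, Equiv.coe_refl,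
    Equiv.mulRight₀_apply, Prod.map_apply, id_eq]
  rw [hg m' md s hs, mul_comm s, mul_left_comm, mul_comm x.2]

variable [DecidableEq F]

lemma IsLay.sum_addChar_mul_fourier_lift {B : BilinForm F E} {g : E × F → ℂ} (hg : IsLay g)
    {G : E × F × F → ℂ}
    (hG : ∀ x' xd s, (B.prod (BilinForm.prod (mul F F) (mul F F))).fourier χ G (x', xd, s) =
      if s ≠ 0 then (B.prod (mul F F)).fourier χ g (x', xd * s) else 0)
    (m : E × F) (l : F) :
    ∑ x, χ (B.prod (BilinForm.prod (mul F F) (mul F F)) (m.1, m.2, l) x) *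
        (B.prod (BilinForm.prod (mul F F) (mul F F))).fourier χ G x =
      (∑ s ∈ univ.filter (· ≠ 0), χ (l * s)) *
        ∑ y, χ (B.prod (mul F F) m y) * (B.prod (mul F F)).fourier χ g y := by
  set B' := B.prod (mul F F)
  set BW := B.prod (BilinForm.prod (mul F F) (mul F F))
  have hĜ : ∀ y s, BW.fourier χ G (y.1, y.2, s) = if s ≠ 0 then B'.fourier χ g y else 0 := by
    intro y s
    rw [hG]
    split_ifs with hs
    exacts [hg.fourier_apply_mul_snd hs y, rfl]
  calc ∑ x, χ (BW (m.1, m.2, l) x) * BW.fourier χ G x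
      = ∑ s, ∑ y : E × F, χ (BW (m.1, m.2, l) (y.1, y.2, s)) * BW.fourier χ G (y.1, y.2, s) := by
        rw [← (Equiv.prodAssoc E F F).sum_comp, Fintype.sum_prod_type, sum_comm]
        rfl
    _ = ∑ s, (if s ≠ 0 then χ (l * s) else 0) * ∑ y, χ (B' m y) * B'.fourier χ g y := by
        refine sum_congr rfl fun s _ => ?_
        rw [mul_sum]
        refine sum_congr rfl fun y _ => ?_
        rw [hĜ]
        split_ifs
        · simp only [BW, B', BilinForm.prod_apply, mul_apply', ← add_assoc,
            AddChar.map_add_eq_mul]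
          ring
        · simp
    _ = _ := by rw [← sum_mul, sum_filter]

theorem IsLay.apply_eq_of_fourier_eq_lift (hχ : χ ≠ 1) {B : BilinForm F E}
    (hB : B.SeparatingLeft) {g : E × F → ℂ} (hg : IsLay g) {G : E × F × F → ℂ}
    (hG : ∀ x' xd s, (B.prod (BilinForm.prod (mul F F) (mul F F))).fourier χ G (x', xd, s) =
      if s ≠ 0 then (B.prod (mul F F)).fourier χ g (x', xd * s) else 0)
    (m : E × F) (l : F) :
    G (m.1, m.2, l) = (Fintype.card F : ℂ)⁻¹ * g m * ∑ s ∈ univ.filter (· ≠ 0), χ (l * s) := by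
  have hW := hg.sum_addChar_mul_fourier_lift hG m l
  rw [(hB.prod (separatingLeft_mul.prod separatingLeft_mul)).fourier_inversion hχ,
    (hB.prod separatingLeft_mul).fourier_inversion hχ] at hW
  simp only [Fintype.card_prod, Nat.cast_mul] at hW
  have hq : (Fintype.card F : ℂ) ≠ 0 := Nat.cast_ne_zero.2 Fintype.card_ne_zero
  have hE : (Fintype.card E : ℂ) ≠ 0 := Nat.cast_ne_zero.2 Fintype.card_ne_zero
  have key : (Fintype.card F : ℂ) * G (m.1, m.2, l) =
      g m * ∑ s ∈ univ.filter (· ≠ 0), χ (l * s) :=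
    mul_left_cancel₀ (mul_ne_zero hE hq) (by linear_combination hW)
  rw [mul_assoc, ← key, inv_mul_cancel_left₀ hq]

end Lay

theorem lifted_function_explicit_form_general
    (F : Type) [Field F] [Fintype F] [DecidableEq F]
    (d : ℕ)
    (χ : AddChar F ℂ) (hχ : χ ≠ 1)
    (g : ((Fin (d - 1) → F) × F) → ℂ)
    (hlay : ∀ (m' : Fin (d - 1) → F) (md s : F), s ≠ 0 → g (m', md) = g (m', s * md))
    (G : ((Fin (d - 1) → F) × F × F) → ℂ)
    (hG : ∀ (x' : Fin (d - 1) → F) (xd s : F),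
      (∑ m : (Fin (d - 1) → F) × F × F,
          χ (-(∑ i, m.1 i * x' i + m.2.1 * xd + m.2.2 * s)) * G m) =
        if s ≠ 0 then
          ∑ m : (Fin (d - 1) → F) × F,
            χ (-(∑ i, m.1 i * x' i + m.2 * (xd * s))) * g m
        else 0) :
    ∀ (m : (Fin (d - 1) → F) × F) (l : F),
      G (m.1, m.2, l) =
        (Fintype.card F : ℂ)⁻¹ * g m *
          ∑ s ∈ univ.filter (fun s : F => s ≠ 0), χ (l * s) := by
  refine IsLay.apply_eq_of_fourier_eq_lift hχ separatingLeft_dotProductBilin hlay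
    fun x' xd s => ?_
  simpa only [BilinForm.fourier, BilinForm.prod_apply, dotProductBilin_apply_apply, mul_apply',
    dotProduct, add_assoc] using hG x' xd s

theorem lifted_function_explicit_form
    (F : Type) [Field F] [Fintype F] [DecidableEq F]
    (hchar : ringChar F ≠ 2)
    (d : ℕ) (hd2 : 2 ≤ d)
    (χ : AddChar F ℂ) (hχ : χ ≠ 1)
    (g : ((Fin (d - 1) → F) × F) → ℂ)
    (hlay : ∀ (m' : Fin (d - 1) → F) (md s : F), s ≠ 0 → g (m', md) = g (m', s * md))
    (G : ((Fin (d - 1) → F) × F × F) → ℂ)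
    (hG : ∀ (x' : Fin (d - 1) → F) (xd s : F),
      (∑ m : (Fin (d - 1) → F) × F × F,
          χ (-(∑ i, m.1 i * x' i + m.2.1 * xd + m.2.2 * s)) * G m) =
        if s ≠ 0 then
          ∑ m : (Fin (d - 1) → F) × F,
            χ (-(∑ i, m.1 i * x' i + m.2 * (xd * s))) * g m
        else 0) :
    ∀ (m : (Fin (d - 1) → F) × F) (l : F),
      G (m.1, m.2, l) =
        (Fintype.card F : ℂ)⁻¹ * g m *
          ∑ s ∈ univ.filter (fun s : F => s ≠ 0), χ (l * s) :=
  lifted_function_explicit_form_general F d χ hχ g hlay G hG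
end
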